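/- arXiv:2605.20975 — 3 statements merged into one kernel-verified Lean document; each statement's English description precedes it below -/
import Mathlib

section
/- Let (Ω₀, F, P) be a probability space, Ω a nonempty finite set, PFL : Ω → ℝ a function with minimizer W⋆, and for each W ∈ Ω let ξ_W be a real-valued random variable. Let S = max_{W ∈ Ω} |ξ_W|, let E[S] denote its expectation (assumed finite), and let σ > 0. Assume the tail bound P(S − E[S] > u) ≤ 2·exp(−u²/(2σ²)) holds for every u > 0. Let W_Y⋆ : Ω₀ → Ω be a random element that almost surely minimizes the noisy objective Y(W) = PFL(W) + ξ_W over Ω. Then for every μ > 2·E[S], P(PFL(W_Y⋆) − PFL(W⋆) > μ) ≤ 2·exp(−(μ/2 − E[S])²/(2σ²)). -/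
/-! A minimizer of `f + g` is `2s`-suboptimal for `f` as soon as `|g| ≤ s`: the noise can
lift the true minimizer by at most `s` and lower the noisy one by at most `s`. Hence the event
`PFL(W_Y⋆) − PFL(W⋆) > μ` forces `S > μ/2`, i.e. `S − E[S] > μ/2 − E[S]`, which is a
positive deviation controlled by the tail bound. -/

open MeasureTheory

/-- The supremum `S(ω) = max_{W ∈ Ω} |ξ_W(ω)|` of the noise process. -/
noncomputable def noiseSup {Ω₀ : Type*} {Ω : Type*} [Fintype Ω] [Nonempty Ω]
    (ξ : Ω → Ω₀ → ℝ) (ω : Ω₀) : ℝ :=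
  Finset.univ.sup' Finset.univ_nonempty fun W => |ξ W ω|

lemma sub_le_two_mul_of_add_le_add {α : Type*} {f g : α → ℝ} {x y : α} {s : ℝ}
    (hmin : f x + g x ≤ f y + g y) (hx : |g x| ≤ s) (hy : |g y| ≤ s) :
    f x - f y ≤ 2 * s := by
  linarith [(abs_le.1 hx).1, (abs_le.1 hy).2]

lemma abs_le_noiseSup {Ω₀ Ω : Type*} [Fintype Ω] [Nonempty Ω]
    (ξ : Ω → Ω₀ → ℝ) (W : Ω) (ω : Ω₀) : |ξ W ω| ≤ noiseSup ξ ω :=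
  Finset.le_sup' (fun W => |ξ W ω|) (Finset.mem_univ W)

lemma sub_le_two_mul_noiseSup_of_isMinimizer {Ω₀ Ω : Type*} [Fintype Ω] [Nonempty Ω]
    {PFL : Ω → ℝ} {ξ : Ω → Ω₀ → ℝ} {ω : Ω₀} {Wy : Ω}
    (hmin : ∀ W, PFL Wy + ξ Wy ω ≤ PFL W + ξ W ω) (W : Ω) :
    PFL Wy - PFL W ≤ 2 * noiseSup ξ ω :=
  sub_le_two_mul_of_add_le_add (g := fun W => ξ W ω) (hmin W) (abs_le_noiseSup ξ Wy ω) (abs_le_noiseSup ξ W ω)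

theorem global_mu_optimality_general
    {Ω₀ : Type*} [MeasurableSpace Ω₀] (P : Measure Ω₀)
    {Ω : Type*} [Fintype Ω] [Nonempty Ω]
    (PFL : Ω → ℝ) (Wstar : Ω)
    (ξ : Ω → Ω₀ → ℝ)
    (σ : ℝ)
    (htail : ∀ u : ℝ, 0 < u →
      P {ω | noiseSup ξ ω - ∫ ω', noiseSup ξ ω' ∂P > u}
        ≤ ENNReal.ofReal (2 * Real.exp (-(u ^ 2) / (2 * σ ^ 2))))
    (WYstar : Ω₀ → Ω)
    (hWYstar : ∀ᵐ ω ∂P, ∀ W : Ω, PFL (WYstar ω) + ξ (WYstar ω) ω ≤ PFL W + ξ W ω)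
    (μ : ℝ) (hμ : 2 * ∫ ω', noiseSup ξ ω' ∂P < μ) :
    P {ω | PFL (WYstar ω) - PFL Wstar > μ}
      ≤ ENNReal.ofReal
          (2 * Real.exp (-((μ / 2 - ∫ ω', noiseSup ξ ω' ∂P) ^ 2) / (2 * σ ^ 2))) := by
  set E := ∫ ω', noiseSup ξ ω' ∂P
  have hdev : 0 < μ / 2 - E := by linarith
  have hsub : {ω | PFL (WYstar ω) - PFL Wstar > μ} ≤ᵐ[P]
      {ω | noiseSup ξ ω - E > μ / 2 - E} := by
    filter_upwards [hWYstar] with ω hmin hgap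
    have := sub_le_two_mul_noiseSup_of_isMinimizer hmin Wstar
    change μ < PFL (WYstar ω) - PFL Wstar at hgap
    change μ / 2 - E < noiseSup ξ ω - E
    linarith
  exact (measure_mono_ae hsub).trans (htail _ hdev)

/-- **Global μ-Optimality** theorem: under the Borell–TIS-type tail bound
`P(S − E[S] > u) ≤ 2·exp(−u²/(2σ²))` on the supremum `S` of the noise process,
for every `μ > 2·E[S]` the probability that the minimizer of the noisy objective
fails to be `μ`-suboptimal for the true objective is at most
`2·exp(−(μ/2 − E[S])²/(2σ²))`. -/
theorem global_mu_optimality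
    {Ω₀ : Type*} [MeasurableSpace Ω₀] (P : Measure Ω₀) [IsProbabilityMeasure P]
    {Ω : Type*} [Fintype Ω] [Nonempty Ω]
    (PFL : Ω → ℝ) (Wstar : Ω) (hWstar : ∀ W, PFL Wstar ≤ PFL W)
    (ξ : Ω → Ω₀ → ℝ)
    (hint : Integrable (noiseSup ξ) P)
    (σ : ℝ) (hσ : 0 < σ)
    (htail : ∀ u : ℝ, 0 < u →
      P {ω | noiseSup ξ ω - ∫ ω', noiseSup ξ ω' ∂P > u}
        ≤ ENNReal.ofReal (2 * Real.exp (-(u ^ 2) / (2 * σ ^ 2))))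
    (WYstar : Ω₀ → Ω)
    (hWYstar : ∀ᵐ ω ∂P, ∀ W : Ω, PFL (WYstar ω) + ξ (WYstar ω) ω ≤ PFL W + ξ W ω)
    (μ : ℝ) (hμ : 2 * ∫ ω', noiseSup ξ ω' ∂P < μ) :
    P {ω | PFL (WYstar ω) - PFL Wstar > μ}
      ≤ ENNReal.ofReal
          (2 * Real.exp (-((μ / 2 - ∫ ω', noiseSup ξ ω' ∂P) ^ 2) / (2 * σ ^ 2))) :=
  global_mu_optimality_general P PFL Wstar ξ σ htail WYstar hWYstar μ hμ
end

section
/- Let M > 0, ε > 0, and δ ∈ (0, 1), and set σ = (√(2M·ln(1/δ)) + √(2M·(ln(1/δ) + ε))) / (2ε). Then the infimum over α ∈ (1, ∞) of the function α ↦ M·α/(2σ²) + ln(1/δ)/(α − 1) equals ε. In particular, this noise scale σ makes the composed release of M Gaussian-mechanism queries of unit L₂-sensitivity satisfy the target privacy level ε at failure probability δ under RDP-to-DP conversion. -/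
/-!
Write `L = ln(1/δ)` and `c = M/(2σ²)`. Substituting `t = α - 1`, AM-GM gives
`c α + L/(α - 1) = c + c t + L/t ≥ c + 2√(cL) = (√c + √L)² - L`, with equality at
`t = √L/√c`. Equation 8 is exactly the choice of `σ` for which `√c = √(L + ε) - √L`
(rationalize: `ε = (√(L + ε) - √L)(√(L + ε) + √L)`), so that the minimum is `(L + ε) - L = ε`.
-/

open Real Set

theorem isLeast_image_Ioi_mul_add_div_sub_one {s L : ℝ} (hs : 0 < s) (hL : 0 < L) :
    IsLeast ((fun α : ℝ => s ^ 2 * α + L / (α - 1)) '' Ioi 1) ((s + √L) ^ 2 - L) := by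
  obtain ⟨r, hr, rfl⟩ : ∃ r, 0 < r ∧ r ^ 2 = L := ⟨√L, sqrt_pos.mpr hL, sq_sqrt hL.le⟩
  rw [sqrt_sq hr.le]
  refine ⟨⟨1 + r / s, lt_add_of_pos_right 1 (div_pos hr hs), ?_⟩, ?_⟩
  · simp only [add_sub_cancel_left]
    field_simp
    ring
  · rintro _ ⟨α, hα, rfl⟩
    have ht : 0 < α - 1 := sub_pos.mpr hα
    have hsq : 0 ≤ (s * (α - 1) - r) ^ 2 / (α - 1) := by positivity
    have hexpand : s ^ 2 * α + r ^ 2 / (α - 1) - ((s + r) ^ 2 - r ^ 2)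
        = (s * (α - 1) - r) ^ 2 / (α - 1) := by
      field_simp
      ring
    linarith

theorem div_two_mul_sq_eq_of_calibration {M L ε σ : ℝ} (hM : 0 < M) (hL : 0 ≤ L)
    (hε : 0 < ε) (hσ : σ = (√(2 * M * L) + √(2 * M * (L + ε))) / (2 * ε)) :
    M / (2 * σ ^ 2) = (√(L + ε) - √L) ^ 2 := by
  rw [hσ, sqrt_mul (by positivity) L, sqrt_mul (by positivity) (L + ε)]
  have hk : √(2 * M) ^ 2 = 2 * M := sq_sqrt (by positivity)
  have hk0 : 0 < √(2 * M) := by positivity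
  have hε' : ε = (√(L + ε) - √L) * (√L + √(L + ε)) := by
    linear_combination sq_sqrt hL - sq_sqrt (add_pos_of_nonneg_of_pos hL hε).le
  have hsum : 0 < √L + √(L + ε) := by positivity
  generalize √(2 * M) = k at hk hk0
  generalize √L = r at hε' hsum ⊢
  generalize √(L + ε) = q at hε' hsum ⊢
  field_simp
  linear_combination (2 * M * (ε + (q - r) * (r + q))) * hε' - ((q - r) * (r + q)) ^ 2 * hk

/-- Closed-form noise calibration (Equation 8): with
`σ = (√(2M·ln(1/δ)) + √(2M·(ln(1/δ) + ε))) / (2ε)`, the RDP-to-DP conversion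
`inf_{α > 1} (M·α/(2σ²) + ln(1/δ)/(α − 1))` equals exactly the target privacy
level `ε`. -/
theorem noise_calibration (M ε δ σ : ℝ) (hM : 0 < M) (hε : 0 < ε)
    (hδ0 : 0 < δ) (hδ1 : δ < 1)
    (hσ : σ = (Real.sqrt (2 * M * Real.log (1 / δ))
        + Real.sqrt (2 * M * (Real.log (1 / δ) + ε))) / (2 * ε)) :
    sInf ((fun α : ℝ => M * α / (2 * σ ^ 2) + Real.log (1 / δ) / (α - 1)) ''
        Set.Ioi 1) = ε := by
  set L := log (1 / δ)
  have hL : 0 < L := log_pos (one_lt_one_div hδ0 hδ1)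
  have hc := div_two_mul_sq_eq_of_calibration hM hL.le hε hσ
  have hs : 0 < √(L + ε) - √L := sub_pos.mpr (sqrt_lt_sqrt hL.le (by linarith))
  have hf : (fun α : ℝ => M * α / (2 * σ ^ 2) + L / (α - 1))
      = fun α => (√(L + ε) - √L) ^ 2 * α + L / (α - 1) := by
    ext α
    rw [← hc]
    ring
  rw [hf, (isLeast_image_Ioi_mul_add_div_sub_one hs hL).csInf_eq, sub_add_cancel,
    sq_sqrt (by positivity)]
  ring
end

section
/- Let X and Y be nonempty finite types, and let n_{xy} > 0 for (x, y) ∈ X × Y be positive real joint counts with total n = Σ_{x,y} n_{xy}. Define p_{xy} = n_{xy}/n, the marginals p_x = Σ_y p_{xy} and p_y = Σ_x p_{xy}, the mutual information MI = Σ_{x,y} p_{xy}·log(p_{xy}/(p_x·p_y)), and the pointwise mutual information PMI(x, y) = log(p_{xy}/(p_x·p_y)). Then for each fixed cell (x₀, y₀), the function t ↦ MI evaluated with count n_{x₀y₀} replaced by t (all other counts fixed) is differentiable at t = n_{x₀y₀} with derivative (1/n)·(PMI(x₀, y₀) − MI). -/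
section

variable {X Y : Type*} [Fintype X] [Fintype Y]

/-- Total number of samples: `n = Σ_{x,y} n_{xy}`. -/
noncomputable def totalCount (c : X × Y → ℝ) : ℝ := ∑ p, c p

/-- Empirical joint probability `p_{xy} = n_{xy}/n`. -/
noncomputable def pJoint (c : X × Y → ℝ) (p : X × Y) : ℝ := c p / totalCount c

/-- Marginal `p_x = Σ_y p_{xy}`. -/
noncomputable def pMargX (c : X × Y → ℝ) (x : X) : ℝ := ∑ y, pJoint c (x, y)

/-- Marginal `p_y = Σ_x p_{xy}`. -/
noncomputable def pMargY (c : X × Y → ℝ) (y : Y) : ℝ := ∑ x, pJoint c (x, y)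

/-- Pointwise mutual information `PMI(x, y) = log(p_{xy}/(p_x·p_y))`. -/
noncomputable def empPMI (c : X × Y → ℝ) (x : X) (y : Y) : ℝ :=
  Real.log (pJoint c (x, y) / (pMargX c x * pMargY c y))

/-- Empirical mutual information `MI = Σ_{x,y} p_{xy}·log(p_{xy}/(p_x·p_y))`. -/
noncomputable def empMI (c : X × Y → ℝ) : ℝ :=
  ∑ x, ∑ y, pJoint c (x, y) * empPMI c x y

end

/-!
In counts, `n · MI = Σ n_{xy} log n_{xy} - Σ_x n_x log n_x - Σ_y n_y log n_y + n log n`.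
Raising `n_{x₀y₀}` raises exactly one term of each sum, and `n`, at unit rate; since
`(t log t)' = log t + 1`, the four `+1`s cancel and `n · MI` has derivative
`log n_{x₀y₀} - log n_{x₀} - log n_{y₀} + log n = PMI(x₀, y₀)`.
The quotient rule with `n' = 1` then gives `(PMI - MI) / n`.
-/

open Real Topology

theorem HasDerivAt.sum_mul_log {ι : Type*} [Fintype ι] {v : ℝ → ι → ℝ} {v' : ι → ℝ} {t : ℝ}
    (hv : HasDerivAt v v' t) (hv0 : ∀ i, v t i ≠ 0) :
    HasDerivAt (fun s => ∑ i, v s i * Real.log (v s i)) (∑ i, (Real.log (v t i) + 1) * v' i) t :=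
  HasDerivAt.fun_sum fun i _ =>
    HasDerivAt.comp (h₂ := fun s => s * Real.log s) t (Real.hasDerivAt_mul_log (hv0 i))
      (hasDerivAt_pi.1 hv i)

section

variable {X Y : Type*}

noncomputable def countMargX [Fintype Y] (c : X × Y → ℝ) (x : X) : ℝ := ∑ y, c (x, y)

noncomputable def countMargY [Fintype X] (c : X × Y → ℝ) (y : Y) : ℝ := ∑ x, c (x, y)

noncomputable def scaledMI [Fintype X] [Fintype Y] (c : X × Y → ℝ) : ℝ :=
  ∑ p, c p * log (c p) - ∑ x, countMargX c x * log (countMargX c x)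
    - ∑ y, countMargY c y * log (countMargY c y) + totalCount c * log (totalCount c)

section Counts

variable [Fintype X] [Fintype Y]

theorem pMargX_eq_div (c : X × Y → ℝ) (x : X) :
    pMargX c x = countMargX c x / totalCount c := by
  simp only [pMargX, pJoint, countMargX, Finset.sum_div]

theorem pMargY_eq_div (c : X × Y → ℝ) (y : Y) :
    pMargY c y = countMargY c y / totalCount c := by
  simp only [pMargY, pJoint, countMargY, Finset.sum_div]

theorem totalCount_pos [Nonempty X] [Nonempty Y] {c : X × Y → ℝ} (hc : ∀ p, 0 < c p) :
    0 < totalCount c :=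
  Finset.sum_pos (fun p _ => hc p) Finset.univ_nonempty

end Counts

theorem countMargX_pos [Fintype Y] [Nonempty Y] {c : X × Y → ℝ} (hc : ∀ p, 0 < c p) (x : X) :
    0 < countMargX c x :=
  Finset.sum_pos (fun y _ => hc (x, y)) Finset.univ_nonempty

theorem countMargY_pos [Fintype X] [Nonempty X] {c : X × Y → ℝ} (hc : ∀ p, 0 < c p) (y : Y) :
    0 < countMargY c y :=
  Finset.sum_pos (fun x _ => hc (x, y)) Finset.univ_nonempty

theorem empPMI_eq [Fintype X] [Fintype Y] [Nonempty X] [Nonempty Y] {c : X × Y → ℝ}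
    (hc : ∀ p, 0 < c p) (x : X) (y : Y) :
    empPMI c x y = log (c (x, y)) + log (totalCount c)
      - log (countMargX c x) - log (countMargY c y) := by
  have hn := totalCount_pos hc
  have ha := countMargX_pos hc x
  have hb := countMargY_pos hc y
  have harg : pJoint c (x, y) / (pMargX c x * pMargY c y)
      = c (x, y) * totalCount c / (countMargX c x * countMargY c y) := by
    rw [pMargX_eq_div, pMargY_eq_div, pJoint]
    field_simp
  rw [empPMI, harg, log_div (mul_pos (hc _) hn).ne' (mul_pos ha hb).ne',
    log_mul (hc _).ne' hn.ne', log_mul ha.ne' hb.ne']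
  ring

theorem empMI_eq_scaledMI_div [Fintype X] [Fintype Y] [Nonempty X] [Nonempty Y]
    {c : X × Y → ℝ} (hc : ∀ p, 0 < c p) :
    empMI c = scaledMI c / totalCount c := by
  have hn := (totalCount_pos hc).ne'
  rw [eq_div_iff hn, empMI, Finset.sum_mul]
  have expand : ∀ x y, pJoint c (x, y) * empPMI c x y * totalCount c
      = c (x, y) * log (c (x, y)) + c (x, y) * log (totalCount c)
        - c (x, y) * log (countMargX c x) - c (x, y) * log (countMargY c y) := by
    intro x y
    rw [empPMI_eq hc, pJoint]
    field_simp
  simp only [Finset.sum_mul, expand, Finset.sum_add_distrib, Finset.sum_sub_distrib]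
  rw [Finset.sum_comm (f := fun x y => c (x, y) * log (countMargY c y))]
  simp only [← Finset.sum_mul, ← Fintype.sum_prod_type', scaledMI, countMargX, countMargY,
    totalCount]
  ring

section Derivatives

variable {v : ℝ → X × Y → ℝ} {v' : X × Y → ℝ} {t : ℝ}

theorem HasDerivAt.totalCount [Fintype X] [Fintype Y] (hv : HasDerivAt v v' t) :
    HasDerivAt (fun s => totalCount (v s)) (totalCount v') t :=
  HasDerivAt.fun_sum fun p _ => hasDerivAt_pi.1 hv p

theorem HasDerivAt.countMargX [Fintype Y] (hv : HasDerivAt v v' t) :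
    HasDerivAt (fun s => countMargX (v s)) (countMargX v') t :=
  hasDerivAt_pi.2 fun x => HasDerivAt.fun_sum fun y _ => hasDerivAt_pi.1 hv (x, y)

theorem HasDerivAt.countMargY [Fintype X] (hv : HasDerivAt v v' t) :
    HasDerivAt (fun s => countMargY (v s)) (countMargY v') t :=
  hasDerivAt_pi.2 fun y => HasDerivAt.fun_sum fun x _ => hasDerivAt_pi.1 hv (x, y)

variable [DecidableEq X] [DecidableEq Y]

theorem totalCount_single [Fintype X] [Fintype Y] (p : X × Y) (a : ℝ) :
    totalCount (Pi.single p a) = a := by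
  simp [totalCount]

theorem countMargX_single [Fintype Y] (x : X) (y : Y) (a : ℝ) :
    countMargX (Pi.single (x, y) a) = Pi.single x a := by
  ext x'
  simp [countMargX, Pi.single_apply, ite_and]

theorem countMargY_single [Fintype X] (x : X) (y : Y) (a : ℝ) :
    countMargY (Pi.single (x, y) a) = Pi.single y a := by
  ext y'
  simp [countMargY, Pi.single_apply, ite_and]

theorem HasDerivAt.scaledMI [Fintype X] [Fintype Y] [Nonempty X] [Nonempty Y] {x₀ : X} {y₀ : Y}
    (hv : HasDerivAt v (Pi.single (x₀, y₀) 1) t) (hpos : ∀ p, 0 < v t p) :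
    HasDerivAt (fun s => scaledMI (v s)) (empPMI (v t) x₀ y₀) t := by
  have hJ := hv.sum_mul_log fun p => (hpos p).ne'
  have hA := hv.countMargX.sum_mul_log fun x => (countMargX_pos hpos x).ne'
  have hB := hv.countMargY.sum_mul_log fun y => (countMargY_pos hpos y).ne'
  have hN := (Real.hasDerivAt_mul_log (totalCount_pos hpos).ne').comp t hv.totalCount
  refine (((hJ.sub hA).sub hB).add hN).congr_deriv ?_
  simp only [countMargX_single, countMargY_single, totalCount_single, Pi.single_apply,
    mul_ite, mul_one, mul_zero, Finset.sum_ite_eq', Finset.mem_univ, if_true]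
  rw [empPMI_eq hpos]
  ring

end Derivatives

end

theorem mi_count_derivative_general
    {X Y : Type*} [Fintype X] [Fintype Y]
    [DecidableEq X] [DecidableEq Y]
    (c : X × Y → ℝ) (hc : ∀ p, 0 < c p) (x₀ : X) (y₀ : Y) :
    HasDerivAt (fun t => empMI (Function.update c (x₀, y₀) t))
      ((1 / totalCount c) * (empPMI c x₀ y₀ - empMI c))
      (c (x₀, y₀)) := by
  have : Nonempty X := ⟨x₀⟩
  have : Nonempty Y := ⟨y₀⟩
  have hn := (totalCount_pos hc).ne'
  have hu := hasDerivAt_update c (x₀, y₀) (c (x₀, y₀))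
  have hquot := (hu.scaledMI (by simpa using hc)).div hu.totalCount (by simpa using hn)
  simp only [Function.update_eq_self, totalCount_single] at hquot
  have hupdate_pos : ∀ t > 0, ∀ p, 0 < Function.update c (x₀, y₀) t p := fun t ht =>
    (Function.forall_update_iff c fun _ s => 0 < s).2 ⟨ht, fun p _ => hc p⟩
  have hloc : (fun t => empMI (Function.update c (x₀, y₀) t)) =ᶠ[𝓝 (c (x₀, y₀))]
      fun t => scaledMI (Function.update c (x₀, y₀) t) / totalCount (Function.update c (x₀, y₀) t) :=
    (eventually_gt_nhds (hc _)).mono fun t ht => empMI_eq_scaledMI_div (hupdate_pos t ht)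
  refine (hquot.congr_of_eventuallyEq hloc).congr_deriv ?_
  rw [empMI_eq_scaledMI_div hc]
  field_simp

/-- Gradient of mutual information with respect to a joint count (Equation 7):
for positive joint counts, the map sending the single count `n_{x₀y₀}` to the
empirical mutual information is differentiable at `n_{x₀y₀}` with derivative
`(1/n)·(PMI(x₀, y₀) − MI)`. -/
theorem mi_count_derivative
    {X Y : Type*} [Fintype X] [Fintype Y] [Nonempty X] [Nonempty Y]
    [DecidableEq X] [DecidableEq Y]
    (c : X × Y → ℝ) (hc : ∀ p, 0 < c p) (x₀ : X) (y₀ : Y) :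
    HasDerivAt (fun t => empMI (Function.update c (x₀, y₀) t))
      ((1 / totalCount c) * (empPMI c x₀ y₀ - empMI c))
      (c (x₀, y₀)) :=
  mi_count_derivative_general c hc x₀ y₀
end
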